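/- arXiv:1801.00988 — 3 statements merged into one kernel-verified Lean document; each statement's English description precedes it below -/
import Mathlib

section
/- Let λ > 0, D > 0, T > 0, ε ∈ (0,1), and L ≥ 2 an integer. Define E_B(μ) = T·ln(1/ε) / (D·ln(T·ln(1/ε)/(μ·D) + 1)) for μ > 0. Then L · E_B(λ/L) > E_B(λ). -/
/-! Splitting the load by `L` multiplies the argument `T ln(1/ε)/(μ D)` of the logarithm by `L`,
and by Bernoulli's inequality `1 + L a < (1 + a)^L` the logarithm grows by less than the factor `L`. -/

open Real

lemma Real.log_mul_add_one_lt_mul_log_add_one {a s : ℝ} (ha : 0 < a) (hs : 1 < s) :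
    log (s * a + 1) < s * log (a + 1) := by
  have bernoulli : 1 + s * a < (1 + a) ^ s :=
    one_add_mul_self_lt_rpow_one_add (by linarith) ha.ne' hs
  calc log (s * a + 1) < log ((1 + a) ^ s) := log_lt_log (by positivity) (by linarith)
    _ = s * log (a + 1) := by rw [log_rpow (by linarith), add_comm]

lemma div_log_add_one_lt_mul_div_log_mul_add_one {K a s : ℝ} (hK : 0 < K) (ha : 0 < a)
    (hs : 1 < s) : K / log (a + 1) < s * (K / log (s * a + 1)) := by
  have hlog : 0 < log (s * a + 1) := log_pos (by nlinarith)
  rw [mul_div_assoc', div_lt_div_iff₀ (log_pos (by linarith)) hlog]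
  have := mul_lt_mul_of_pos_left (log_mul_add_one_lt_mul_log_add_one ha hs) hK
  linarith

theorem stmt_2 (lam D T eps : ℝ) (hlam : 0 < lam) (hD : 0 < D) (hT : 0 < T)
    (heps : eps ∈ Set.Ioo (0 : ℝ) 1) (L : ℕ) (hL : 2 ≤ L)
    (EB : ℝ → ℝ)
    (hEB : ∀ mu : ℝ, 0 < mu →
      EB mu = T * Real.log (1 / eps) / (D * Real.log (T * Real.log (1 / eps) / (mu * D) + 1))) :
    (L : ℝ) * EB (lam / L) > EB lam := by
  obtain ⟨heps0, heps1⟩ := heps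
  have hL1 : (1 : ℝ) < L := by exact_mod_cast hL
  set c := T * log (1 / eps)
  have hc : 0 < c := mul_pos hT (log_pos (one_lt_one_div heps0 heps1))
  have load_split : c / (lam / L * D) = L * (c / (lam * D)) := by
    field_simp
  rw [hEB lam hlam, hEB _ (by positivity), load_split, ← div_div c D, ← div_div c D]
  exact div_log_add_one_lt_mul_div_log_mul_add_one (div_pos hc hD) (by positivity) hL1
end

section
/- Let C₁, C₂, C₃ > 0 and define g(B) = C₁·B·(exp(C₂/B + C₃/√B) − 1) for B > 0. Then there exists a unique B_min > 0 minimizing g; moreover g is strictly decreasing on (0, B_min] and strictly increasing on [B_min, ∞). -/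
noncomputable def Faux (C2 C3 t : ℝ) : ℝ :=
  Real.exp (-(C2*t^2 + C3*t)) - 1 + C2*t^2 + C3/2*t

noncomputable def F1aux (C2 C3 t : ℝ) : ℝ :=
  -(2*C2*t + C3) * Real.exp (-(C2*t^2 + C3*t)) + 2*C2*t + C3/2

noncomputable def F2aux (C2 C3 t : ℝ) : ℝ :=
  ((2*C2*t + C3)^2 - 2*C2) * Real.exp (-(C2*t^2 + C3*t)) + 2*C2

lemma hasDerivAt_Faux (C2 C3 t : ℝ) :
    HasDerivAt (Faux C2 C3) (F1aux C2 C3 t) t := by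
  have h1 : HasDerivAt (fun t : ℝ => -(C2*t^2 + C3*t)) (-(2*C2*t + C3)) t := by
    have := (((hasDerivAt_pow 2 t).const_mul C2).add ((hasDerivAt_id' (x := t)).const_mul C3)).neg
    exact this.congr_deriv (by ring)
  have h2 := h1.exp
  have h3 : HasDerivAt (fun t : ℝ => Real.exp (-(C2*t^2 + C3*t)) - 1 + C2*t^2 + C3/2*t)
      (-(2*C2*t + C3) * Real.exp (-(C2*t^2 + C3*t)) + 2*C2*t + C3/2) t := by
    have := ((h2.sub_const 1).add ((hasDerivAt_pow 2 t).const_mul C2)).add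
      ((hasDerivAt_id' (x := t)).const_mul (C3/2))
    exact this.congr_deriv (by ring)
  exact h3

lemma hasDerivAt_F1aux (C2 C3 t : ℝ) :
    HasDerivAt (F1aux C2 C3) (F2aux C2 C3 t) t := by
  have h1 : HasDerivAt (fun t : ℝ => -(C2*t^2 + C3*t)) (-(2*C2*t + C3)) t := by
    have := (((hasDerivAt_pow 2 t).const_mul C2).add ((hasDerivAt_id' (x := t)).const_mul C3)).neg
    exact this.congr_deriv (by ring)
  have h2 := h1.exp
  have h4 : HasDerivAt (fun t : ℝ => -(2*C2*t + C3)) (-(2*C2)) t := by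
    have := (((hasDerivAt_id' (x := t)).const_mul (2*C2)).add_const C3).neg
    exact this.congr_deriv (by ring)
  have h5 := (h4.mul h2).add (((hasDerivAt_id' (x := t)).const_mul (2*C2)).add_const (C3/2))
  refine (h5.congr_deriv ?_).congr_of_eventuallyEq (Filter.Eventually.of_forall fun x => ?_)
  · unfold F2aux; ring
  · simp only [F1aux, Pi.add_apply, Pi.mul_apply]; ring

lemma F2aux_pos {C2 C3 : ℝ} (hC2 : 0 < C2) (hC3 : 0 < C3) {t : ℝ} (ht : 0 ≤ t) :
    0 < F2aux C2 C3 t := by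
  unfold F2aux
  set X := (2*C2*t + C3)^2 - 2*C2 with hX
  have hu : 0 ≤ C2*t^2 + C3*t := by positivity
  have he : Real.exp (-(C2*t^2 + C3*t)) ≤ 1 := Real.exp_le_one_iff.mpr (by linarith)
  have hep : 0 < Real.exp (-(C2*t^2 + C3*t)) := Real.exp_pos _
  rcases le_or_gt 0 X with h | h
  · nlinarith
  · have : X * Real.exp (-(C2*t^2 + C3*t)) ≥ X := by nlinarith
    have hsq : 0 < (2*C2*t + C3)^2 := by positivity
    nlinarith

lemma F1aux_cont (C2 C3 : ℝ) : Continuous (F1aux C2 C3) :=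
  continuous_iff_continuousAt.mpr fun x => (hasDerivAt_F1aux C2 C3 x).continuousAt

lemma Faux_cont (C2 C3 : ℝ) : Continuous (Faux C2 C3) :=
  continuous_iff_continuousAt.mpr fun x => (hasDerivAt_Faux C2 C3 x).continuousAt

lemma F1aux_strictMono {C2 C3 : ℝ} (hC2 : 0 < C2) (hC3 : 0 < C3) :
    StrictMonoOn (F1aux C2 C3) (Set.Ici 0) := by
  apply strictMonoOn_of_deriv_pos (convex_Ici 0)
  · exact (F1aux_cont C2 C3).continuousOn
  · intro x hx
    rw [interior_Ici] at hx
    rw [(hasDerivAt_F1aux C2 C3 x).deriv]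
    exact F2aux_pos hC2 hC3 hx.le

lemma F1aux_root {C2 C3 : ℝ} (hC2 : 0 < C2) (hC3 : 0 < C3) :
    ∃ s : ℝ, 0 < s ∧ F1aux C2 C3 s = 0 := by
  set T : ℝ := max 1 ((2*C2/C3 + 1)/(2*C2) + 1) with hT
  have hT1 : 1 ≤ T := le_max_left _ _
  have hT2 : (2*C2/C3 + 1)/(2*C2) + 1 ≤ T := le_max_right _ _
  have hT0 : 0 < T := by linarith
  have hFT : 0 < F1aux C2 C3 T := by
    have hE1 : 1 + C3*T ≤ Real.exp (C2*T^2 + C3*T) := by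
      nlinarith [Real.add_one_le_exp (C2*T^2 + C3*T), sq_nonneg T]
    have hinv : Real.exp (-(C2*T^2 + C3*T)) ≤ (1 + C3*T)⁻¹ := by
      rw [Real.exp_neg]
      exact inv_anti₀ (by positivity) hE1
    have key : (2*C2*T + C3) * (1 + C3*T)⁻¹ < 2*C2*T + C3/2 := by
      rw [← div_eq_mul_inv, div_lt_iff₀ (by positivity)]
      have h2C2T : 2*C2/C3 + 1 + 2*C2 ≤ 2*C2*T := by
        have := mul_le_mul_of_nonneg_left hT2 (le_of_lt (by positivity : (0:ℝ) < 2*C2))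
        calc 2*C2/C3 + 1 + 2*C2 = 2*C2 * ((2*C2/C3 + 1)/(2*C2) + 1) := by
              field_simp
            _ ≤ 2*C2*T := this
        
      have hq : 2*C2 + C3 ≤ 2*C2*C3*T^2 := by
        have h1 : (2*C2/C3 + 1) * C3 = 2*C2 + C3 := by field_simp
        have h5 : (2*C2/C3 + 1) * (C3*T) ≤ (2*C2*T) * (C3*T) :=
          mul_le_mul_of_nonneg_right (by linarith) (by positivity)
        nlinarith [h1, h5, hT1]
      nlinarith [hq, mul_nonneg (mul_nonneg hC3.le hC3.le) hT0.le]
    have h6 : (2*C2*T + C3) * Real.exp (-(C2*T^2 + C3*T)) ≤ (2*C2*T + C3) * (1 + C3*T)⁻¹ :=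
      mul_le_mul_of_nonneg_left hinv (by positivity)
    unfold F1aux
    linarith
  have hF0 : F1aux C2 C3 0 < 0 := by
    unfold F1aux; simp; linarith
  have := intermediate_value_Ioo (le_of_lt hT0) (F1aux_cont C2 C3).continuousOn
  have h0mem : (0:ℝ) ∈ Set.Ioo (F1aux C2 C3 0) (F1aux C2 C3 T) := ⟨hF0, hFT⟩
  obtain ⟨s, hs, hFs⟩ := this h0mem
  exact ⟨s, hs.1, hFs⟩

/-- Full sign structure of Faux: unique positive root with sign change -/
lemma Faux_sign {C2 C3 : ℝ} (hC2 : 0 < C2) (hC3 : 0 < C3) :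
    ∃ tstar : ℝ, 0 < tstar ∧
      (∀ t, 0 < t → t < tstar → Faux C2 C3 t < 0) ∧
      Faux C2 C3 tstar = 0 ∧
      (∀ t, tstar < t → 0 < Faux C2 C3 t) := by
  obtain ⟨s, hs0, hFs⟩ := F1aux_root hC2 hC3
  have hmonoF1 := F1aux_strictMono hC2 hC3
  -- sign of F1
  have hF1neg : ∀ t, 0 ≤ t → t < s → F1aux C2 C3 t < 0 := fun t ht hts => by
    have := hmonoF1 (Set.mem_Ici.mpr ht) (Set.mem_Ici.mpr hs0.le) hts
    linarith
  have hF1pos : ∀ t, s < t → 0 < F1aux C2 C3 t := fun t hts => by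
    have := hmonoF1 (Set.mem_Ici.mpr hs0.le) (Set.mem_Ici.mpr (hs0.le.trans hts.le)) hts
    linarith
  -- F strictly anti on [0,s]
  have hanti : StrictAntiOn (Faux C2 C3) (Set.Icc 0 s) := by
    apply strictAntiOn_of_deriv_neg (convex_Icc 0 s) (Faux_cont C2 C3).continuousOn
    intro x hx
    rw [interior_Icc] at hx
    rw [(hasDerivAt_Faux C2 C3 x).deriv]
    exact hF1neg x hx.1.le hx.2
  -- F strictly mono on [s,∞)
  have hmono : StrictMonoOn (Faux C2 C3) (Set.Ici s) := by
    apply strictMonoOn_of_deriv_pos (convex_Ici s) (Faux_cont C2 C3).continuousOn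
    intro x hx
    rw [interior_Ici] at hx
    rw [(hasDerivAt_Faux C2 C3 x).deriv]
    exact hF1pos x hx
  have hF00 : Faux C2 C3 0 = 0 := by unfold Faux; simp
  have hFsneg : Faux C2 C3 s < 0 := by
    have := hanti (Set.left_mem_Icc.mpr hs0.le) (Set.right_mem_Icc.mpr hs0.le) hs0
    rwa [hF00] at this
  -- find T2 > s with F T2 > 0
  set T2 : ℝ := max (s+1) (1/Real.sqrt C2 + 1) with hT2def
  have hT2s : s < T2 := lt_of_lt_of_le (by linarith) (le_max_left _ _)
  have hT2b : 1/Real.sqrt C2 + 1 ≤ T2 := le_max_right _ _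
  have hsqC2 : 0 < Real.sqrt C2 := Real.sqrt_pos.mpr hC2
  have hT2pos : 0 < T2 := lt_of_lt_of_le (by positivity) hT2b
  have hFT2 : 0 < Faux C2 C3 T2 := by
    have h1 : 1 < C2 * T2^2 := by
      have h2 : 1/Real.sqrt C2 < T2 := by linarith
      have h3 : Real.sqrt C2 * Real.sqrt C2 = C2 := Real.mul_self_sqrt hC2.le
      have h4 : 1 < Real.sqrt C2 * T2 := by
        rw [div_lt_iff₀ hsqC2] at h2; linarith [mul_comm T2 (Real.sqrt C2)]
      nlinarith
    unfold Faux
    have := Real.exp_pos (-(C2*T2^2 + C3*T2))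
    nlinarith
  obtain ⟨tstar, hts, hFts⟩ := intermediate_value_Ioo hT2s.le
    (Faux_cont C2 C3).continuousOn (Set.mem_Ioo.mpr ⟨hFsneg, hFT2⟩)
  refine ⟨tstar, hs0.trans hts.1, ?_, hFts, ?_⟩
  · intro t ht0 htt
    rcases le_or_gt t s with h | h
    · have := hanti (Set.mem_Icc.mpr ⟨le_refl 0, hs0.le⟩) (Set.mem_Icc.mpr ⟨ht0.le, h⟩) ht0
      rwa [hF00] at this
    · have := hmono (Set.mem_Ici.mpr h.le) (Set.mem_Ici.mpr hts.1.le) htt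
      rwa [hFts] at this
  · intro t htt
    have := hmono (Set.mem_Ici.mpr hts.1.le) (Set.mem_Ici.mpr (hts.1.le.trans htt.le)) htt
    rwa [hFts] at this

lemma hasDerivAt_gform (C1 C2 C3 : ℝ) {B : ℝ} (hB : 0 < B) :
    HasDerivAt (fun x : ℝ => C1 * x * (Real.exp (C2/x + C3/Real.sqrt x) - 1))
      (-C1 * Real.exp (C2/B + C3/Real.sqrt B) * Faux C2 C3 (1/Real.sqrt B)) B := by
  have hsB : 0 < Real.sqrt B := Real.sqrt_pos.mpr hB
  have hs2 : Real.sqrt B ^ 2 = B := Real.sq_sqrt hB.le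
  have h1 : HasDerivAt (fun x : ℝ => C2/x) (C2 * (-(B^2)⁻¹)) B := by
    have := (hasDerivAt_inv hB.ne').const_mul C2
    exact this.congr_of_eventuallyEq (Filter.Eventually.of_forall fun x => by simp [div_eq_mul_inv])
  have hsq := Real.hasDerivAt_sqrt hB.ne'
  have h2 : HasDerivAt (fun x : ℝ => C3/Real.sqrt x)
      (C3 * (-(1/(2*Real.sqrt B)) / (Real.sqrt B)^2)) B := by
    have := (hsq.inv hsB.ne').const_mul C3
    exact this.congr_of_eventuallyEq (Filter.Eventually.of_forall fun x => by simp [div_eq_mul_inv])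
  have h3 := ((h1.add h2).exp.sub_const 1)
  have h4 := ((hasDerivAt_id' (x := B)).const_mul C1).mul h3
  refine h4.congr_deriv ?_
  symm
  have hE : Real.exp (-(C2*(1/Real.sqrt B)^2 + C3*(1/Real.sqrt B)))
      = (Real.exp (C2/B + C3/Real.sqrt B))⁻¹ := by
    rw [← Real.exp_neg]
    congr 1
    rw [div_pow, one_pow, hs2]
    ring
  unfold Faux
  rw [hE]
  have hEne := Real.exp_ne_zero (C2/B + C3/Real.sqrt B)
  have hBne := hB.ne'
  have hsBne := hsB.ne'
  simp only [Pi.add_apply]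
  rw [div_pow, one_pow, hs2]
  field_simp
  ring

theorem stmt_7 (C1 C2 C3 : ℝ) (hC1 : 0 < C1) (hC2 : 0 < C2) (hC3 : 0 < C3)
    (g : ℝ → ℝ)
    (hg : ∀ B : ℝ, 0 < B → g B = C1 * B * (Real.exp (C2 / B + C3 / Real.sqrt B) - 1)) :
    ∃ Bmin : ℝ, 0 < Bmin ∧
      (∀ B : ℝ, 0 < B → g Bmin ≤ g B) ∧
      StrictAntiOn g (Set.Ioc 0 Bmin) ∧
      StrictMonoOn g (Set.Ici Bmin) ∧
      ∀ B' : ℝ, 0 < B' → (∀ B : ℝ, 0 < B → g B' ≤ g B) → B' = Bmin := by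
  obtain ⟨ts, hts0, hFneg, hFts, hFpos⟩ := Faux_sign hC2 hC3
  set Bmin : ℝ := 1/ts^2 with hBmin
  have hBmin0 : 0 < Bmin := by positivity
  have hsqBmin : Real.sqrt Bmin = 1/ts := by
    rw [hBmin, one_div, Real.sqrt_inv, Real.sqrt_sq hts0.le, one_div]
  -- derivative of g at positive points
  have hgd : ∀ B : ℝ, 0 < B → HasDerivAt g
      (-C1 * Real.exp (C2/B + C3/Real.sqrt B) * Faux C2 C3 (1/Real.sqrt B)) B := by
    intro B hB
    refine (hasDerivAt_gform C1 C2 C3 hB).congr_of_eventuallyEq ?_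
    filter_upwards [Ioi_mem_nhds hB] with x hx
    exact hg x hx
  -- sign of derivative
  have hderiv_neg : ∀ B : ℝ, 0 < B → B < Bmin →
      -C1 * Real.exp (C2/B + C3/Real.sqrt B) * Faux C2 C3 (1/Real.sqrt B) < 0 := by
    intro B hB hBlt
    have hsB : 0 < Real.sqrt B := Real.sqrt_pos.mpr hB
    have h1 : Real.sqrt B < 1/ts := by
      rw [← hsqBmin]; exact Real.sqrt_lt_sqrt hB.le hBlt
    have h2 : ts < 1/Real.sqrt B := by
      rw [lt_div_iff₀ hsB]
      have := mul_lt_mul_of_pos_left h1 hts0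
      rwa [mul_one_div, div_self hts0.ne'] at this
    have hF := hFpos _ h2
    have hE := Real.exp_pos (C2/B + C3/Real.sqrt B)
    nlinarith [mul_pos (mul_pos hC1 hE) hF]
  have hderiv_pos : ∀ B : ℝ, Bmin < B →
      0 < -C1 * Real.exp (C2/B + C3/Real.sqrt B) * Faux C2 C3 (1/Real.sqrt B) := by
    intro B hBlt
    have hB : 0 < B := hBmin0.trans hBlt
    have hsB : 0 < Real.sqrt B := Real.sqrt_pos.mpr hB
    have h1 : 1/ts < Real.sqrt B := by
      rw [← hsqBmin]; exact Real.sqrt_lt_sqrt hBmin0.le hBlt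
    have h2 : 1/Real.sqrt B < ts := by
      rw [div_lt_iff₀ hsB]
      have := mul_lt_mul_of_pos_left h1 hts0
      rwa [mul_one_div, div_self hts0.ne'] at this
    have hF := hFneg _ (by positivity) h2
    have hE := Real.exp_pos (C2/B + C3/Real.sqrt B)
    nlinarith [mul_pos (mul_pos hC1 hE) (neg_pos.mpr hF)]
  -- continuity of g on positive reals
  have hgc : ∀ B : ℝ, 0 < B → ContinuousAt g B := fun B hB => (hgd B hB).continuousAt
  -- strict antitone on Ioc 0 Bmin
  have hanti : StrictAntiOn g (Set.Ioc 0 Bmin) := by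
    apply strictAntiOn_of_deriv_neg (convex_Ioc 0 Bmin)
    · exact fun x hx => (hgc x hx.1).continuousWithinAt
    · intro x hx
      rw [interior_Ioc] at hx
      rw [(hgd x hx.1).deriv]
      exact hderiv_neg x hx.1 hx.2
  -- strict monotone on Ici Bmin
  have hmono : StrictMonoOn g (Set.Ici Bmin) := by
    apply strictMonoOn_of_deriv_pos (convex_Ici Bmin)
    · exact fun x hx => (hgc x (lt_of_lt_of_le hBmin0 hx)).continuousWithinAt
    · intro x hx
      rw [interior_Ici] at hx
      rw [(hgd x (hBmin0.trans hx)).deriv]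
      exact hderiv_pos x hx
  have hmin : ∀ B : ℝ, 0 < B → g Bmin ≤ g B := by
    intro B hB
    rcases lt_trichotomy B Bmin with h | h | h
    · exact (hanti ⟨hB, h.le⟩ ⟨hBmin0, le_refl _⟩ h).le
    · rw [h]
    · exact (hmono (Set.self_mem_Ici) (Set.mem_Ici.mpr h.le) h).le
  refine ⟨Bmin, hBmin0, hmin, hanti, hmono, ?_⟩
  intro B' hB' hmin'
  by_contra hne
  rcases lt_or_gt_of_ne hne with h | h
  · have h1 : g Bmin < g B' := hanti ⟨hB', h.le⟩ ⟨hBmin0, le_refl _⟩ h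
    have h2 : g B' ≤ g Bmin := hmin' Bmin hBmin0
    linarith
  · have h1 : g Bmin < g B' := hmono Set.self_mem_Ici (Set.mem_Ici.mpr h.le) h
    have h2 : g B' ≤ g Bmin := hmin' Bmin hBmin0
    linarith
end

section
/- Fix D̂ > T > 0, D̃ > D̂, constants C_b > 0 (packet-size term) and C_q > 0 (finite-blocklength term). For D ∈ {D̂, D̃} define Φ_D(B) = B·(exp(C_b/((D−T)·B) + C_q/√((D−T)·B)) − 1) for B > 0, and suppose B̂, B̃ ∈ (0, W] satisfy Φ_{D̂}(B̂) = Φ_{D̃}(B̃), where Φ_{D̂} and Φ_{D̃} are strictly decreasing on (0, W]. Then B̃ < ((D̂−T)/(D̃−T))·B̂. -/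
theorem stmt_14 (T Dh Dt Cb Cq W : ℝ)
    (hT : 0 < T) (hDh : T < Dh) (hDt : Dh < Dt) (hCb : 0 < Cb) (hCq : 0 < Cq) (hW : 0 < W)
    (Phi : ℝ → ℝ → ℝ)
    (hPhi : ∀ D B : ℝ, Phi D B =
      B * (Real.exp (Cb / ((D - T) * B) + Cq / Real.sqrt ((D - T) * B)) - 1))
    (Bh Bt : ℝ) (hBh : Bh ∈ Set.Ioc (0 : ℝ) W) (hBt : Bt ∈ Set.Ioc (0 : ℝ) W)
    (hantih : StrictAntiOn (Phi Dh) (Set.Ioc (0 : ℝ) W))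
    (hantit : StrictAntiOn (Phi Dt) (Set.Ioc (0 : ℝ) W))
    (heq : Phi Dh Bh = Phi Dt Bt) :
    Bt < ((Dh - T) / (Dt - T)) * Bh := by
  obtain ⟨hBh0, hBhW⟩ := hBh
  have hBtmem : Bt ∈ Set.Ioc (0:ℝ) W := hBt
  have hh : (0:ℝ) < Dh - T := by linarith
  have ht : (0:ℝ) < Dt - T := by linarith
  set r : ℝ := (Dh - T) / (Dt - T) with hr
  have hr0 : 0 < r := div_pos hh ht
  have hr1 : r < 1 := (div_lt_one ht).mpr (by linarith)
  set B' : ℝ := r * Bh with hB'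
  have hB'0 : 0 < B' := mul_pos hr0 hBh0
  have hB'lt : B' < Bh := by
    have := mul_lt_mul_of_pos_right hr1 hBh0
    simpa [hB'] using this
  have hB'mem : B' ∈ Set.Ioc (0:ℝ) W := ⟨hB'0, le_of_lt (lt_of_lt_of_le hB'lt hBhW)⟩
  have hkey : (Dt - T) * B' = (Dh - T) * Bh := by
    rw [hB', hr, div_mul_eq_mul_div, mul_div_assoc', mul_div_cancel_left₀ _ ht.ne']
  have hprod : (0:ℝ) < (Dh - T) * Bh := mul_pos hh hBh0
  have hsq : (0:ℝ) < Real.sqrt ((Dh - T) * Bh) := Real.sqrt_pos.mpr hprod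
  have hxpos : (0:ℝ) < Cb / ((Dh - T) * Bh) + Cq / Real.sqrt ((Dh - T) * Bh) :=
    add_pos (div_pos hCb hprod) (div_pos hCq hsq)
  have hE : (1:ℝ) < Real.exp (Cb / ((Dh - T) * Bh) + Cq / Real.sqrt ((Dh - T) * Bh)) := by
    calc (1:ℝ) = Real.exp 0 := Real.exp_zero.symm
    _ < _ := Real.exp_lt_exp.mpr hxpos
  have hPhiB' : Phi Dt B' =
      B' * (Real.exp (Cb / ((Dh - T) * Bh) + Cq / Real.sqrt ((Dh - T) * Bh)) - 1) := by
    rw [hPhi, hkey]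
  have hPhih : Phi Dh Bh =
      Bh * (Real.exp (Cb / ((Dh - T) * Bh) + Cq / Real.sqrt ((Dh - T) * Bh)) - 1) := hPhi Dh Bh
  have hlt : Phi Dt B' < Phi Dh Bh := by
    rw [hPhiB', hPhih]
    exact mul_lt_mul_of_pos_right hB'lt (by linarith)
  by_contra hcon
  push_neg at hcon
  rcases eq_or_lt_of_le hcon with h | h
  · rw [heq, ← h] at hlt
    exact lt_irrefl _ hlt
  · have := hantit hB'mem hBtmem h
    rw [← heq] at this
    linarith
end
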